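/- Let R > 0, let μ be a probability measure on ℝ supported in [−R, R], let δ > 0, and let p_δ be the density of μ * γ_δ. Then for every x ≥ R, ∫_R^x (1/p_δ(t)) dt ≤ 2δ(x − R) / (((x − R)² + δ) · p_δ(x)). -/

import Mathlib

open MeasureTheory Real

/-- Density of the convolution μ * γ_δ on ℝ:
p_δ(t) = ∫ (2πδ)^{-1/2} exp(−(t−s)²/(2δ)) dμ(s). -/
noncomputable def pdelta (δ : ℝ) (μ : Measure ℝ) (t : ℝ) : ℝ :=
  ∫ s, (Real.sqrt (2 * π * δ))⁻¹ * Real.exp (-((t - s) ^ 2) / (2 * δ)) ∂μ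

/-! With E(t) = exp ((t - R)² / (2δ)), each Gaussian term of E(t) p_δ(t) equals
exp (((t - R)² - (t - s)²) / (2δ)) times a constant, which is nonincreasing in t because s ≤ R.
Hence E · p_δ is antitone, so 1 / p_δ(t) ≤ E(t) / (E(x) p_δ(x)) on [R, x], and after the shift
u = t - R the claim reduces to ∫₀^a exp (u² / (2δ)) du ≤ 2δa / (a² + δ) · exp (a² / (2δ)).
That holds because the right-hand side vanishes at 0 and has derivative
(1 + ((a² - δ) / (a² + δ))²) · exp (a² / (2δ)) ≥ exp (a² / (2δ)). -/

theorem hasDerivAt_two_mul_div_sq_add_mul_exp {δ : ℝ} (hδ : 0 < δ) (b : ℝ) :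
    HasDerivAt (fun b => 2 * δ * b / (b ^ 2 + δ) * exp (b ^ 2 / (2 * δ)))
      ((1 + ((b ^ 2 - δ) / (b ^ 2 + δ)) ^ 2) * exp (b ^ 2 / (2 * δ))) b := by
  have hb : b ^ 2 + δ ≠ 0 := by positivity
  have hquot :=
    ((hasDerivAt_id' b).const_mul (2 * δ)).fun_div ((hasDerivAt_pow 2 b).add_const δ) hb
  have hexp := ((hasDerivAt_pow 2 b).div_const (2 * δ)).exp
  refine (hquot.fun_mul hexp).congr_deriv ?_
  field_simp
  ring

theorem integral_exp_sq_div_le {δ : ℝ} (hδ : 0 < δ) {a : ℝ} (ha : 0 ≤ a) :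
    ∫ u in (0 : ℝ)..a, exp (u ^ 2 / (2 * δ)) ≤ 2 * δ * a / (a ^ 2 + δ) * exp (a ^ 2 / (2 * δ)) := by
  have hderiv := hasDerivAt_two_mul_div_sq_add_mul_exp hδ
  have hcont : Continuous fun u : ℝ =>
      (1 + ((u ^ 2 - δ) / (u ^ 2 + δ)) ^ 2) * exp (u ^ 2 / (2 * δ)) := by
    fun_prop (disch := intro u; positivity)
  calc ∫ u in (0 : ℝ)..a, exp (u ^ 2 / (2 * δ))
      ≤ ∫ u in (0 : ℝ)..a, (1 + ((u ^ 2 - δ) / (u ^ 2 + δ)) ^ 2) * exp (u ^ 2 / (2 * δ)) :=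
        intervalIntegral.integral_mono_on ha (Continuous.intervalIntegrable (by fun_prop) _ _)
          (hcont.intervalIntegrable _ _) fun u _ =>
          le_mul_of_one_le_left (exp_pos _).le (le_add_of_nonneg_right (sq_nonneg _))
    _ = 2 * δ * a / (a ^ 2 + δ) * exp (a ^ 2 / (2 * δ)) := by
        rw [intervalIntegral.integral_eq_sub_of_hasDerivAt (fun u _ => hderiv u)
          (hcont.intervalIntegrable _ _)]
        simp

theorem integrable_pdelta_integrand {δ : ℝ} (hδ : 0 ≤ δ) (μ : Measure ℝ) [IsFiniteMeasure μ]
    (t : ℝ) :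
    Integrable (fun s => (√(2 * π * δ))⁻¹ * exp (-((t - s) ^ 2) / (2 * δ))) μ := by
  refine Integrable.of_bound (by fun_prop) (√(2 * π * δ))⁻¹ (.of_forall fun s => ?_)
  have hexp : exp (-((t - s) ^ 2) / (2 * δ)) ≤ 1 :=
    exp_le_one_iff.2 (div_nonpos_of_nonpos_of_nonneg (by nlinarith) (by positivity))
  rw [norm_of_nonneg (by positivity)]
  exact mul_le_of_le_one_right (by positivity) hexp

theorem pdelta_pos {δ : ℝ} (hδ : 0 < δ) (μ : Measure ℝ) [IsFiniteMeasure μ] [NeZero μ] (t : ℝ) :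
    0 < pdelta δ μ t := by
  have hpos : ∀ s, 0 < (√(2 * π * δ))⁻¹ * exp (-((t - s) ^ 2) / (2 * δ)) := fun s => by positivity
  rw [pdelta, integral_pos_iff_support_of_nonneg (fun s => (hpos s).le)
    (integrable_pdelta_integrand hδ.le μ t), Function.support_eq_univ fun s => (hpos s).ne']
  exact Measure.measure_univ_pos.2 (NeZero.ne μ)

theorem antitone_exp_mul_pdelta {δ : ℝ} (hδ : 0 ≤ δ) (μ : Measure ℝ) [IsFiniteMeasure μ] {R : ℝ}
    (hμ : ∀ᵐ s ∂μ, s ≤ R) : Antitone fun t => exp ((t - R) ^ 2 / (2 * δ)) * pdelta δ μ t := by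
  intro t x htx
  simp only [pdelta, ← integral_const_mul]
  refine integral_mono_ae ((integrable_pdelta_integrand hδ μ x).const_mul _)
    ((integrable_pdelta_integrand hδ μ t).const_mul _) (hμ.mono fun s hs => ?_)
  simp only [mul_left_comm (exp _)]
  rw [← exp_add, ← exp_add]
  refine mul_le_mul_of_nonneg_left (exp_le_exp.2 ?_) (by positivity)
  rw [← add_div, ← add_div]
  refine div_le_div_of_nonneg_right ?_ (by positivity)
  nlinarith [mul_nonneg (sub_nonneg.2 htx) (sub_nonneg.2 hs)]

theorem inv_pdelta_le {δ : ℝ} (hδ : 0 < δ) (μ : Measure ℝ) [IsFiniteMeasure μ] [NeZero μ] {R : ℝ}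
    (hμ : ∀ᵐ s ∂μ, s ≤ R) {t x : ℝ} (htx : t ≤ x) :
    (pdelta δ μ t)⁻¹ ≤
      exp ((t - R) ^ 2 / (2 * δ)) * (exp ((x - R) ^ 2 / (2 * δ)) * pdelta δ μ x)⁻¹ := by
  have hpt := pdelta_pos hδ μ t
  have hpx := pdelta_pos hδ μ x
  calc (pdelta δ μ t)⁻¹
      = exp ((t - R) ^ 2 / (2 * δ)) * (exp ((t - R) ^ 2 / (2 * δ)) * pdelta δ μ t)⁻¹ := by
        field_simp
    _ ≤ exp ((t - R) ^ 2 / (2 * δ)) * (exp ((x - R) ^ 2 / (2 * δ)) * pdelta δ μ x)⁻¹ := by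
        gcongr ?_ * ?_
        exact inv_anti₀ (by positivity) (antitone_exp_mul_pdelta hδ.le μ hμ htx)

theorem stmt10_general (R δ : ℝ) (hδ : 0 < δ)
    (μ : Measure ℝ) [IsProbabilityMeasure μ] (hsupp : μ (Set.Icc (-R) R)ᶜ = 0) :
    ∀ x : ℝ, R ≤ x →
      ∫ t in R..x, (pdelta δ μ t)⁻¹ ≤
        2 * δ * (x - R) / (((x - R) ^ 2 + δ) * pdelta δ μ x) := by
  intro x hx
  have hμ : ∀ᵐ s ∂μ, s ≤ R := measure_mono_null (fun s hs => fun hs' => hs hs'.2) hsupp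
  have hpx := pdelta_pos hδ μ x
  have hxR := sub_nonneg.2 hx
  by_cases hint : IntervalIntegrable (fun t => (pdelta δ μ t)⁻¹) volume R x
  swap
  · rw [intervalIntegral.integral_undef hint]; positivity
  calc ∫ t in R..x, (pdelta δ μ t)⁻¹
      ≤ ∫ t in R..x,
          exp ((t - R) ^ 2 / (2 * δ)) * (exp ((x - R) ^ 2 / (2 * δ)) * pdelta δ μ x)⁻¹ :=
        intervalIntegral.integral_mono_on hx hint
          (Continuous.intervalIntegrable (by fun_prop) _ _) fun t ht => inv_pdelta_le hδ μ hμ ht.2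
    _ = (∫ u in (0 : ℝ)..x - R, exp (u ^ 2 / (2 * δ))) *
          (exp ((x - R) ^ 2 / (2 * δ)) * pdelta δ μ x)⁻¹ := by
        rw [intervalIntegral.integral_mul_const,
          intervalIntegral.integral_comp_sub_right (fun u => exp (u ^ 2 / (2 * δ))), sub_self]
    _ ≤ 2 * δ * (x - R) / ((x - R) ^ 2 + δ) * exp ((x - R) ^ 2 / (2 * δ)) *
          (exp ((x - R) ^ 2 / (2 * δ)) * pdelta δ μ x)⁻¹ := by
        gcongr
        exact integral_exp_sq_div_le hδ hxR
    _ = 2 * δ * (x - R) / (((x - R) ^ 2 + δ) * pdelta δ μ x) := by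
        field_simp

theorem stmt10 (R δ : ℝ) (hR : 0 < R) (hδ : 0 < δ)
    (μ : Measure ℝ) [IsProbabilityMeasure μ] (hsupp : μ (Set.Icc (-R) R)ᶜ = 0) :
    ∀ x : ℝ, R ≤ x →
      ∫ t in R..x, (pdelta δ μ t)⁻¹ ≤
        2 * δ * (x - R) / (((x - R) ^ 2 + δ) * pdelta δ μ x) :=
  stmt10_general R δ hδ μ hsupp
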